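/- Area law for classical correlations of Gibbs distributions of two-site Hamiltonians: Let G = (V, E) be a finite simple graph, let d ≥ 2, and for each edge {u, v} ∈ E let h_{uv} : Fin d × Fin d → ℝ. For a spin configuration σ : V → Fin d set H(σ) = ∑_{{u,v}∈E} h_{uv}(σ_u, σ_v), and for β > 0 let p(σ) = e^{−βH(σ)}/Z with Z = ∑_σ e^{−βH(σ)}. For a subset I ⊆ V with complement O = V∖I, let p_I and p_O be the marginal distributions of p on configurations of I and O. Then the mutual information I(I : O) = S(p_I) + S(p_O) − S(p) (Shannon entropies in bits) satisfies I(I : O) ≤ |∂I| · log₂ d, where ∂I = {v ∈ I : there exists u ∈ O with {u, v} ∈ E} is the boundary of I. -/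

import Mathlib

/-!
Split a configuration as `σ = (a, c)` with `a` its restriction to `I` and `c` its restriction
to `O`, and write `b = a|∂I`. Every bond either lies inside `I` or has both endpoints in
`∂I ∪ O`, so the Gibbs weight factorises as `f(a) · g(b, c)`; equivalently
`p(a,c) p(a',c') = p(a,c') p(a',c)` whenever `a` and `a'` agree on `∂I`. Summing over the fibre
of `b` gives the Markov identity `p(a,c) p(b) = p(a) p(b,c)`, which turns `I(I : O)` into
`S(p_{∂I}) - ∑ p(a,c) log₂ (p(c) / p(b,c)) ≤ S(p_{∂I}) ≤ |∂I| log₂ d`.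
-/

open scoped BigOperators

/-- The Shannon entropy (in bits) of a function on a finite type, `S(p) = −∑ₓ p(x) log₂ p(x)`;
`Real.logb 2 0 = 0` makes the convention `0·log₂ 0 = 0` automatic. -/
noncomputable def shannonEntropy {X : Type*} [Fintype X] (p : X → ℝ) : ℝ :=
  -∑ x, p x * Real.logb 2 (p x)

open Finset Real

lemma shannonEntropy_eq_sum_negMulLog_div {X : Type*} [Fintype X] (p : X → ℝ) :
    shannonEntropy p = (∑ x, negMulLog (p x)) / log 2 := by
  simp only [shannonEntropy, negMulLog, logb, sum_div, ← sum_neg_distrib]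
  exact sum_congr rfl fun x _ => by ring

lemma shannonEntropy_comp_equiv {X Y : Type*} [Fintype X] [Fintype Y] (e : X ≃ Y)
    (p : Y → ℝ) : shannonEntropy (p ∘ e) = shannonEntropy p := by
  simp only [shannonEntropy, Function.comp_apply, e.sum_comp fun y => p y * logb 2 (p y)]

lemma shannonEntropy_le_logb_card {X : Type*} [Fintype X] (w : X → ℝ) (h0 : ∀ x, 0 ≤ w x)
    (h1 : ∑ x, w x = 1) : shannonEntropy w ≤ logb 2 (Fintype.card X) := by
  have : Nonempty X := by
    by_contra hX
    simp [not_nonempty_iff.1 hX] at h1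
  set n : ℝ := (Fintype.card X : ℝ)
  have hn : 0 < n := by simp [n, Fintype.card_pos]
  -- Jensen for the concave `negMulLog` at the points `n * w x`, with uniform weights
  have hJ := concaveOn_negMulLog.le_map_sum (t := univ) (w := fun _ => n⁻¹)
    (p := fun x => n * w x) (fun _ _ => inv_nonneg.2 hn.le)
    (by simp [n, card_univ]) (fun x _ => Set.mem_Ici.2 (mul_nonneg hn.le (h0 x)))
  simp only [smul_eq_mul, ← mul_assoc, inv_mul_cancel₀ hn.ne', one_mul, h1, negMulLog_one,
    negMulLog_mul, mul_add, sum_add_distrib, ← sum_mul, ← mul_sum, mul_one] at hJ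
  have hlog : n⁻¹ * negMulLog n = -log n := by
    rw [negMulLog]; field_simp
  rw [shannonEntropy_eq_sum_negMulLog_div, logb]
  exact div_le_div_of_nonneg_right (by linarith) (log_pos one_lt_two).le

-- The summand of `I(A : C) ≤ S(B)` for a Markov chain `A → B → C`, with `x = p(a,c)`,
-- `xa = p(a)`, `xb = p(b)`, `xbc = p(b,c)` and `xc = p(c)`.
lemma mul_logb_sub_le_of_mul_eq {x xa xb xbc xc : ℝ} (hx : 0 ≤ x) (hxa : x ≤ xa)
    (hxbc : x ≤ xbc) (hbc : xbc ≤ xc) (hmarkov : x * xb = xa * xbc) :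
    x * (logb 2 x - logb 2 xa - logb 2 xc) ≤ -(x * logb 2 xb) := by
  rcases hx.eq_or_lt with rfl | hx
  · simp
  have hxa' := hx.trans_le hxa
  have hxbc' := hx.trans_le hxbc
  have hxb : 0 < xb := pos_of_mul_pos_right (hmarkov ▸ mul_pos hxa' hxbc') hx.le
  have hlog : logb 2 x + logb 2 xb = logb 2 xa + logb 2 xbc := by
    rw [← logb_mul hx.ne' hxb.ne', hmarkov, logb_mul hxa'.ne' hxbc'.ne']
  have hmono : logb 2 xbc ≤ logb 2 xc := logb_le_logb_of_le one_lt_two hxbc' hbc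
  rw [← mul_neg]
  exact mul_le_mul_of_nonneg_left (by linarith) hx.le

section MutualInformation

variable {A B C : Type*} [Fintype A] [Fintype C]

noncomputable def mutualInformation (P : A × C → ℝ) : ℝ :=
  shannonEntropy (fun a => ∑ c, P (a, c)) + shannonEntropy (fun c => ∑ a, P (a, c)) -
    shannonEntropy P

lemma mutualInformation_eq_sum (P : A × C → ℝ) :
    mutualInformation P = ∑ a, ∑ c, P (a, c) *
      (logb 2 (P (a, c)) - logb 2 (∑ c', P (a, c')) - logb 2 (∑ a', P (a', c))) := by
  simp only [mutualInformation, shannonEntropy, Fintype.sum_prod_type, mul_sub, sum_sub_distrib,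
    sum_mul]
  rw [sum_comm (f := fun (c : C) (a : A) => P (a, c) * logb 2 (∑ a', P (a', c)))]
  ring

lemma mul_sum_fiber_eq_of_cross [DecidableEq B] (P : A × C → ℝ) (φ : A → B)
    (hcross : ∀ a a' c c', φ a = φ a' → P (a, c) * P (a', c') = P (a, c') * P (a', c))
    (a : A) (c : C) :
    P (a, c) * ∑ a' with φ a' = φ a, ∑ c', P (a', c') =
      (∑ c', P (a, c')) * ∑ a' with φ a' = φ a, P (a', c) := by
  rw [mul_sum, mul_sum]
  refine sum_congr rfl fun a' ha' => ?_
  rw [mul_sum, sum_mul]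
  exact sum_congr rfl fun c' _ => hcross a a' c c' (mem_filter.1 ha').2.symm

theorem mutualInformation_le_logb_card [Fintype B] (P : A × C → ℝ) (φ : A → B)
    (hP0 : ∀ x, 0 ≤ P x) (hP1 : ∑ x, P x = 1)
    (hcross : ∀ a a' c c', φ a = φ a' → P (a, c) * P (a', c') = P (a, c') * P (a', c)) :
    mutualInformation P ≤ logb 2 (Fintype.card B) := by
  classical
  set PB : B → ℝ := fun b => ∑ a with φ a = b, ∑ c, P (a, c)
  have hPB0 : ∀ b, 0 ≤ PB b := fun b => sum_nonneg fun a _ => sum_nonneg fun c _ => hP0 _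
  have hPB1 : ∑ b, PB b = 1 := by rw [sum_fiberwise univ φ, ← hP1, Fintype.sum_prod_type]
  have hPB_fiber : ∀ b, PB b * logb 2 (PB b) =
      ∑ a with φ a = b, ∑ c, P (a, c) * logb 2 (PB (φ a)) := by
    intro b
    rw [sum_mul]
    exact sum_congr rfl fun a ha => by rw [sum_mul, (mem_filter.1 ha).2]
  calc mutualInformation P = _ := mutualInformation_eq_sum P
    _ ≤ ∑ a, ∑ c, -(P (a, c) * logb 2 (PB (φ a))) := by
      refine sum_le_sum fun a _ => sum_le_sum fun c _ => mul_logb_sub_le_of_mul_eq (hP0 _) ?_ ?_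
        ?_ (mul_sum_fiber_eq_of_cross P φ hcross a c)
      · exact single_le_sum (fun c' _ => hP0 (a, c')) (mem_univ c)
      · exact single_le_sum (fun a' _ => hP0 (a', c)) (mem_filter.2 ⟨mem_univ a, rfl⟩)
      · exact sum_le_sum_of_subset_of_nonneg (subset_univ _) fun a' _ _ => hP0 (a', c)
    _ = shannonEntropy PB := by
      simp only [shannonEntropy, hPB_fiber, sum_neg_distrib]
      rw [sum_fiberwise univ φ fun a => ∑ c, P (a, c) * logb 2 (PB (φ a))]
    _ ≤ logb 2 (Fintype.card B) := shannonEntropy_le_logb_card PB hPB0 hPB1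

end MutualInformation

section PairInteraction

variable {V α : Type*} [Fintype V] (G : SimpleGraph V) [DecidableRel G.Adj]
  (h : V → V → α → α → ℝ)

def adjPairSum (σ : V → α) : ℝ :=
  ∑ u, ∑ v, if G.Adj u v then h u v (σ u) (σ v) else 0

lemma adjPairSum_add_adjPairSum_eq (I : Set V) (σ₁ σ₂ σ₃ σ₄ : V → α)
    (h₁₃ : ∀ v ∈ I, σ₁ v = σ₃ v) (h₂₄ : ∀ v ∈ I, σ₂ v = σ₄ v)
    (h₁₄ : ∀ u v, G.Adj u v → ¬(u ∈ I ∧ v ∈ I) → σ₁ u = σ₄ u)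
    (h₂₃ : ∀ u v, G.Adj u v → ¬(u ∈ I ∧ v ∈ I) → σ₂ u = σ₃ u) :
    adjPairSum G h σ₁ + adjPairSum G h σ₂ = adjPairSum G h σ₃ + adjPairSum G h σ₄ := by
  simp only [adjPairSum, ← sum_add_distrib]
  refine sum_congr rfl fun u _ => sum_congr rfl fun v _ => ?_
  split_ifs with huv
  · by_cases hI : u ∈ I ∧ v ∈ I
    · rw [h₁₃ u hI.1, h₁₃ v hI.2, h₂₄ u hI.1, h₂₄ v hI.2, add_comm]
    · have hI' : ¬(v ∈ I ∧ u ∈ I) := fun h' => hI h'.symm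
      rw [h₁₄ u v huv hI, h₁₄ v u huv.symm hI', h₂₃ u v huv hI, h₂₃ v u huv.symm hI', add_comm]
  · simp

variable [DecidableEq V]

abbrev splitConfig (I : Finset V) : (V → α) ≃ (I → α) × ({v // v ∉ I} → α) :=
  Equiv.piEquivPiSubtypeProd (· ∈ I) fun _ => α

lemma adjPairSum_splitConfig_symm_exchange (I : Finset V) (a a' : I → α)
    (c c' : {v // v ∉ I} → α)
    (hbd : ∀ v (hv : v ∈ I), (∃ u, u ∉ I ∧ G.Adj u v) → a ⟨v, hv⟩ = a' ⟨v, hv⟩) :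
    adjPairSum G h ((splitConfig I).symm (a, c)) + adjPairSum G h ((splitConfig I).symm (a', c')) =
      adjPairSum G h ((splitConfig I).symm (a, c')) +
        adjPairSum G h ((splitConfig I).symm (a', c)) := by
  have hinside : ∀ (a : I → α) (c c' : {v // v ∉ I} → α), ∀ v ∈ (I : Set V),
      (splitConfig I).symm (a, c) v = (splitConfig I).symm (a, c') v := by
    intro a c c' v hv
    simp [Equiv.piEquivPiSubtypeProd, Finset.mem_coe.1 hv]
  have hcut : ∀ (a a' : I → α) (c : {v // v ∉ I} → α),
      (∀ v (hv : v ∈ I), (∃ u, u ∉ I ∧ G.Adj u v) → a ⟨v, hv⟩ = a' ⟨v, hv⟩) →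
      ∀ u v, G.Adj u v → ¬(u ∈ (I : Set V) ∧ v ∈ (I : Set V)) →
        (splitConfig I).symm (a, c) u = (splitConfig I).symm (a', c) u := by
    intro a a' c haa' u v huv huvI
    by_cases hu : u ∈ I
    · have hv : v ∉ I := fun hv => huvI ⟨hu, hv⟩
      simpa [Equiv.piEquivPiSubtypeProd, hu] using haa' u hu ⟨v, hv, huv.symm⟩
    · simp [Equiv.piEquivPiSubtypeProd, hu]
  exact adjPairSum_add_adjPairSum_eq G h I _ _ _ _ (hinside a c c') (hinside a' c' c)
    (hcut a a' c hbd) (hcut a' a c' fun v hv hvb => (hbd v hv hvb).symm)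

end PairInteraction

theorem classical_gibbs_mutual_information_area_law_general
    {V : Type*} [Fintype V] [DecidableEq V]
    (G : SimpleGraph V) [DecidableRel G.Adj] (d : ℕ) (hd : 2 ≤ d)
    (h : V → V → Fin d → Fin d → ℝ)
    (β : ℝ)
    (Ham : (V → Fin d) → ℝ)
    (hHam : ∀ σ, Ham σ = (1 / 2) * ∑ u, ∑ v, if G.Adj u v then h u v (σ u) (σ v) else 0)
    (Z : ℝ) (hZ : Z = ∑ σ : V → Fin d, Real.exp (-β * Ham σ))
    (p : (V → Fin d) → ℝ) (hp : ∀ σ, p σ = Real.exp (-β * Ham σ) / Z)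
    (I : Finset V)
    (pI : ({v // v ∈ I} → Fin d) → ℝ)
    (hpI : ∀ τ, pI τ =
      ∑ z : {v // v ∉ I} → Fin d, p (fun v => if hv : v ∈ I then τ ⟨v, hv⟩ else z ⟨v, hv⟩))
    (pO : ({v // v ∉ I} → Fin d) → ℝ)
    (hpO : ∀ τ, pO τ =
      ∑ z : {v // v ∈ I} → Fin d, p (fun v => if hv : v ∈ I then z ⟨v, hv⟩ else τ ⟨v, hv⟩)) :
    shannonEntropy pI + shannonEntropy pO - shannonEntropy p ≤
      ((I.filter fun v => ∃ u, u ∉ I ∧ G.Adj u v).card : ℝ) * Real.logb 2 d := by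
  set bdry := I.filter fun v => ∃ u, u ∉ I ∧ G.Adj u v
  let P : (I → Fin d) × ({v // v ∉ I} → Fin d) → ℝ := fun x => p ((splitConfig I).symm x)
  let φ : (I → Fin d) → (bdry → Fin d) := fun a v => a ⟨v, (mem_filter.1 v.2).1⟩
  have : Nonempty (Fin d) := ⟨⟨0, by omega⟩⟩
  have hZ0 : 0 < Z := hZ ▸ sum_pos (fun σ _ => exp_pos _) univ_nonempty
  have hP0 : ∀ x, 0 ≤ P x := fun x => by
    simp only [P, hp]
    positivity
  have hP1 : ∑ x, P x = 1 := by
    rw [(splitConfig I).symm.sum_comp p]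
    simp only [hp, ← sum_div, ← hZ, div_self hZ0.ne']
  have hcross : ∀ a a' c c', φ a = φ a' → P (a, c) * P (a', c') = P (a, c') * P (a', c) := by
    intro a a' c c' hφ
    have hE := adjPairSum_splitConfig_symm_exchange G h I a a' c c' fun v hv hvb =>
      congrFun hφ ⟨v, mem_filter.2 ⟨hv, hvb⟩⟩
    simp only [P, hp, hHam, div_mul_div_comm, ← exp_add]
    congr 2
    simp only [adjPairSum] at hE
    linear_combination (-β / 2) * hE
  have hcard : logb 2 (Fintype.card (bdry → Fin d)) = bdry.card * logb 2 d := by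
    simp [logb_pow]
  rw [funext hpI, funext hpO, ← shannonEntropy_comp_equiv (splitConfig I).symm p, ← hcard]
  exact mutualInformation_le_logb_card P φ hP0 hP1 hcross

/-- **Area law for classical correlations of Gibbs distributions of two-site Hamiltonians.**
For a finite simple graph `G = (V, E)`, local dimension `d`, symmetric two-site interactions
`h_{uv}`, energy `H(σ) = ∑_{{u,v}∈E} h_{uv}(σ_u, σ_v)` and Gibbs distribution
`p(σ) = e^{−βH(σ)}/Z` at `β > 0`, the mutual information between the marginals on a region
`I ⊆ V` and its complement satisfies `I(I : O) ≤ |∂I|·log₂ d`, where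
`∂I = {v ∈ I : ∃ u ∉ I, {u,v} ∈ E}`. -/
theorem classical_gibbs_mutual_information_area_law
    {V : Type*} [Fintype V] [DecidableEq V]
    (G : SimpleGraph V) [DecidableRel G.Adj] (d : ℕ) (hd : 2 ≤ d)
    (h : V → V → Fin d → Fin d → ℝ)
    (hsym : ∀ u v a b, h u v a b = h v u b a)
    (β : ℝ) (hβ : 0 < β)
    (Ham : (V → Fin d) → ℝ)
    (hHam : ∀ σ, Ham σ = (1 / 2) * ∑ u, ∑ v, if G.Adj u v then h u v (σ u) (σ v) else 0)
    (Z : ℝ) (hZ : Z = ∑ σ : V → Fin d, Real.exp (-β * Ham σ))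
    (p : (V → Fin d) → ℝ) (hp : ∀ σ, p σ = Real.exp (-β * Ham σ) / Z)
    (I : Finset V)
    (pI : ({v // v ∈ I} → Fin d) → ℝ)
    (hpI : ∀ τ, pI τ =
      ∑ z : {v // v ∉ I} → Fin d, p (fun v => if hv : v ∈ I then τ ⟨v, hv⟩ else z ⟨v, hv⟩))
    (pO : ({v // v ∉ I} → Fin d) → ℝ)
    (hpO : ∀ τ, pO τ =
      ∑ z : {v // v ∈ I} → Fin d, p (fun v => if hv : v ∈ I then z ⟨v, hv⟩ else τ ⟨v, hv⟩)) :
    shannonEntropy pI + shannonEntropy pO - shannonEntropy p ≤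
      ((I.filter fun v => ∃ u, u ∉ I ∧ G.Adj u v).card : ℝ) * Real.logb 2 d :=
  classical_gibbs_mutual_information_area_law_general G d hd h β Ham hHam Z hZ p hp I pI hpI pO hpO
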